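/- Let t: Σ* ⇀ Ω* be a partial function with suffix-closed domain. If a set X ⊆ dom(t) contains a linear fooling set for t, then the ⟨t⟩-growth of X grows exponentially. -/

import Mathlib

/-! Common definitions for sliding-window / visibly pushdown formalizations. -/

/-- `γ` grows polynomially: `γ(n) ∈ O(n^k)` for some `k`. -/
def GrowsPolynomially (γ : ℕ → ℕ) : Prop :=
  ∃ k C : ℕ, ∀ n : ℕ, γ n ≤ C * (n + 1) ^ k

/-- `γ` grows exponentially: there is `c > 1` with `γ(n) ≥ c^n` for infinitely many `n`. -/
def GrowsExponentially (γ : ℕ → ℕ) : Prop :=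
  ∃ c : ℝ, 1 < c ∧ ∀ m : ℕ, ∃ n : ℕ, m ≤ n ∧ c ^ n ≤ (γ n : ℝ)

/-- A set of words is suffix-closed. -/
def SuffixClosed {α : Type} (X : Set (List α)) : Prop :=
  ∀ x ∈ X, ∀ s : List α, s <:+ x → s ∈ X

/-- Domain of a partial function presented with `Option`. -/
def pdom {α β : Type} (t : List α → Option β) : Set (List α) := {x | t x ≠ none}

/-- The `t`-growth of `X`: the number of values of `t` on words of `X` of length at most `n`. -/
noncomputable def growthOf {α : Type} {Y : Type} (t : List α → Y) (X : Set (List α)) (n : ℕ) : ℕ :=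
  (t '' {x | x ∈ X ∧ x.length ≤ n}).ncard

/-- Growth of a language: number of its words of length at most `n`. -/
noncomputable def langGrowth {β : Type} (L : Set (List β)) (n : ℕ) : ℕ :=
  {y | y ∈ L ∧ y.length ≤ n}.ncard

/-- Suffix expansion of a (total or partial) function: the tuple of values on all
nonempty suffixes `a₁⋯aₙ, a₂⋯aₙ, …, aₙ` of the input. -/
def cev {α : Type} {Y : Type} (t : List α → Y) (x : List α) : List Y :=
  x.tails.dropLast.map t

/-- Image of `X` under the partial function `t`. -/
def optImage {α β : Type} (t : List α → Option β) (X : Set (List α)) : Set β :=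
  {y | ∃ x ∈ X, t x = some y}

/-- A language is bounded if it is contained in `w₁* w₂* ⋯ w_k*`. -/
def BoundedLang {β : Type} (L : Set (List β)) : Prop :=
  ∃ ws : List (List β), ∀ x ∈ L, ∃ ms : List ℕ, ms.length = ws.length ∧
    x = (List.zipWith (fun (w : List β) (m : ℕ) => (List.replicate m w).flatten) ws ms).flatten

/-- `{u,v}*`: all concatenations of copies of `u` and `v`. -/
def UVStar {α : Type} (u v : List α) : Set (List α) :=
  {w | ∃ l : List (List α), (∀ p ∈ l, p = u ∨ p = v) ∧ w = l.flatten}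

/-- `{u,v}^{≤ n}`: concatenations of at most `n` words, each equal to `u` or `v`. -/
def UVPow {α : Type} (u v : List α) (n : ℕ) : Set (List α) :=
  {w | ∃ l : List (List α), (∀ p ∈ l, p = u ∨ p = v) ∧ l.length ≤ n ∧ w = l.flatten}

/-- The set `{u₂,v₂}{u,v}* Z`. -/
def FoolingSet {α : Type} (u₂ v₂ u v : List α) (Z : Set (List α)) : Set (List α) :=
  {x | ∃ a w z, (a = u₂ ∨ a = v₂) ∧ w ∈ UVStar u v ∧ z ∈ Z ∧ x = a ++ (w ++ z)}

/-- Linear fooling scheme for a partial function `t`. -/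
def IsLinearFoolingScheme {α Y : Type} (t : List α → Option Y)
    (u₂ v₂ u v : List α) (Z : Set (List α)) : Prop :=
  u₂ <:+ u ∧ v₂ <:+ v ∧ u₂.length = v₂.length ∧
  FoolingSet u₂ v₂ u v Z ⊆ pdom t ∧
  ∃ C : ℕ, ∀ n : ℕ, ∃ z ∈ Z, z.length ≤ C * (n + 1) ∧
    ∀ w ∈ UVPow u v n, t (u₂ ++ (w ++ z)) ≠ t (v₂ ++ (w ++ z))

/-- `X` contains a linear fooling set for `t`. -/
def ContainsLinearFoolingSet {α Y : Type} (t : List α → Option Y) (X : Set (List α)) : Prop :=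
  ∃ u₂ v₂ u v Z, IsLinearFoolingScheme t u₂ v₂ u v Z ∧ FoolingSet u₂ v₂ u v Z ⊆ X

/-! ### Transducers and rational functions -/

/-- A finite-state transducer over `(α, β)` with terminal output function. -/
structure Transducer (α β : Type) where
  Q : Type
  finQ : Fintype Q
  I : Set Q
  F : Set Q
  Δ : Set (Q × List α × List β × Q)
  finΔ : Δ.Finite
  o : Q → List β

namespace Transducer

variable {α β : Type}

/-- A run from `p` to `r` with input `x` and output `y`. -/
inductive Run (A : Transducer α β) : A.Q → List α → List β → A.Q → Prop
  | nil (q : A.Q) : Run A q [] [] q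
  | cons {p q r : A.Q} {x₁ x : List α} {y₁ y : List β} :
      (p, x₁, y₁, q) ∈ A.Δ → Run A q x y r → Run A p (x₁ ++ x) (y₁ ++ y) r

/-- The transduction defined by a transducer. -/
def T (A : Transducer α β) : Set (List α × List β) :=
  {p | ∃ q₀ q y, q₀ ∈ A.I ∧ q ∈ A.F ∧ A.Run q₀ p.1 y q ∧ p.2 = y ++ A.o q}

end Transducer

/-- A partial function is rational if its graph is the transduction of some transducer. -/
def IsRationalFun {α β : Type} (t : List α → Option (List β)) : Prop :=
  ∃ A : Transducer α β, ∀ x y, t x = some y ↔ (x, y) ∈ A.T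

/-! ### Right congruences, suffix expansions, critical tuples -/

/-- A right congruence: an equivalence relation compatible with appending on the right. -/
def IsRightCongruence {α : Type} (r : List α → List α → Prop) : Prop :=
  Equivalence r ∧ ∀ x y z : List α, r x y → r (x ++ z) (y ++ z)

/-- Suffix expansion of a relation: words of the same length whose corresponding
nonempty suffixes are all related. -/
def SuffixExpansion {α : Type} (r : List α → List α → Prop) (x y : List α) : Prop :=
  x.length = y.length ∧ ∀ i < x.length, r (x.drop i) (y.drop i)

/-- Number of `r`-classes of words of length at most `n`. -/
noncomputable def classCount {α : Type} (r : List α → List α → Prop) (n : ℕ) : ℕ :=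
  Set.ncard {C : Set (List α) | ∃ x : List α, x.length ≤ n ∧ C = {y | r x y}}

/-- A relation has finite index if it has finitely many classes. -/
def FiniteIndex {α : Type} (r : List α → List α → Prop) : Prop :=
  Set.Finite {C : Set (List α) | ∃ x : List α, C = {y | r x y}}

/-- Critical tuple in a right congruence. -/
def IsCriticalTuple {α : Type} (r : List α → List α → Prop) (u₂ v₂ u v : List α) : Prop :=
  1 ≤ u₂.length ∧ u₂.length = v₂.length ∧ u₂ <:+ u ∧ v₂ <:+ v ∧
  ∀ w ∈ UVStar u v, ¬ r (u₂ ++ w) (v₂ ++ w)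

/-- The Myhill–Nerode right congruence of a language. -/
def MNrel {α : Type} (L : Set (List α)) (x y : List α) : Prop :=
  ∀ z : List α, x ++ z ∈ L ↔ y ++ z ∈ L

/-! ### Suffix distance and the canonical right congruence of a rational function -/

/-- Longest common prefix. -/
def cpre {β : Type} [DecidableEq β] : List β → List β → List β
  | a :: x, b :: y => if a = b then a :: cpre x y else []
  | _, _ => []

/-- `‖x,y‖ = |x| + |y| − 2|x ∧ y|`, where `x ∧ y` is the longest common suffix. -/
def suffDist {β : Type} [DecidableEq β] (x y : List β) : ℕ :=
  x.length + y.length - 2 * (cpre x.reverse y.reverse).length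

/-- Value of a partial function (defaulting to the empty word off the domain). -/
def pval {α β : Type} (t : List α → Option (List β)) (x : List α) : List β :=
  (t x).getD []

/-- The right congruence `R_t` of Reutenauer–Schützenberger. -/
def Rt {α β : Type} [DecidableEq β] (t : List α → Option (List β)) (u v : List α) : Prop :=
  (∀ z : List α, u ++ z ∈ pdom t ↔ v ++ z ∈ pdom t) ∧
  Set.Finite {d : ℕ | ∃ w : List α, u ++ w ∈ pdom t ∧ v ++ w ∈ pdom t ∧
      d = suffDist (pval t (u ++ w)) (pval t (v ++ w))}

/-- Two partial functions are adjacent. -/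
def Adjacent {α β : Type} [DecidableEq β] (t₁ t₂ : List α → Option (List β)) : Prop :=
  Set.Finite {d : ℕ | ∃ w : List α, w ∈ pdom t₁ ∧ w ∈ pdom t₂ ∧
      d = suffDist (pval t₁ w) (pval t₂ w)}

/-! ### Visibly pushdown automata -/

/-- Kinds of letters of a pushdown alphabet. -/
inductive VPKind : Type
  | call : VPKind
  | ret : VPKind
  | intern : VPKind
deriving DecidableEq

/-- A visibly pushdown automaton over the pushdown alphabet determined by `pa`.
The bottom-of-stack symbol `⊥` is represented implicitly by the empty stack. -/
structure VPA (α : Type) (pa : α → VPKind) where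
  Q : Type
  finQ : Fintype Q
  Γ : Type
  finΓ : Fintype Γ
  q₀ : Q
  F : Set Q
  δc : Q → α → Γ × Q
  δr : Q → α → Option Γ → Q
  δi : Q → α → Q

namespace VPA

variable {α : Type} {pa : α → VPKind}

/-- One step of the VPA on a configuration (stack with top at the head, state). -/
def step (A : VPA α pa) (c : List A.Γ × A.Q) (a : α) : List A.Γ × A.Q :=
  match pa a with
  | VPKind.call => ((A.δc c.2 a).1 :: c.1, (A.δc c.2 a).2)
  | VPKind.intern => (c.1, A.δi c.2 a)
  | VPKind.ret =>
    match c.1 with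
    | [] => ([], A.δr c.2 a none)
    | γ :: st => (st, A.δr c.2 a (some γ))

/-- Extended transition function on words. -/
def run (A : VPA α pa) (c : List A.Γ × A.Q) (w : List α) : List A.Γ × A.Q :=
  w.foldl A.step c

/-- The language accepted by a VPA (from the initial configuration `⊥q₀`). -/
def acceptsLang (A : VPA α pa) : Set (List α) :=
  {w | (A.run ([], A.q₀) w).2 ∈ A.F}

/-- Language accepted from a configuration. -/
def AccLang (A : VPA α pa) (c : List A.Γ × A.Q) : Set (List α) :=
  {w | (A.run c w).2 ∈ A.F}

/-- The reachable configurations. -/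
def rConf (A : VPA α pa) : Set (List A.Γ × A.Q) :=
  Set.range (fun w => A.run ([], A.q₀) w)

end VPA

/-- A language is a visibly pushdown language over the pushdown alphabet `pa`. -/
def IsVPL {α : Type} (pa : α → VPKind) (L : Set (List α)) : Prop :=
  ∃ A : VPA α pa, L = A.acceptsLang

/-- Well-matched words over a pushdown alphabet. -/
inductive WellMatched {α : Type} (pa : α → VPKind) : List α → Prop
  | nil : WellMatched pa []
  | intern (a : α) : pa a = VPKind.intern → WellMatched pa [a]
  | append {u v : List α} : WellMatched pa u → WellMatched pa v → WellMatched pa (u ++ v)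
  | wrap {w : List α} {a b : α} : WellMatched pa w → pa a = VPKind.call → pa b = VPKind.ret →
      WellMatched pa (a :: (w ++ [b]))

/-- Descending words: concatenations of well-matched words and return letters. -/
def Descending {α : Type} (pa : α → VPKind) (w : List α) : Prop :=
  ∃ l : List (List α),
    (∀ p ∈ l, WellMatched pa p ∨ ∃ b : α, pa b = VPKind.ret ∧ p = [b]) ∧ w = l.flatten

/-- Length-lexicographic order on configurations `⊥αq` (stacks compared bottom-first). -/
def ConfLe {Q Γ : Type} (ltQ : LinearOrder Q) (ltΓ : LinearOrder Γ)
    (c d : List Γ × Q) : Prop :=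
  c.1.length < d.1.length ∨
    (c.1.length = d.1.length ∧
      (List.Lex ltΓ.lt c.1.reverse d.1.reverse ∨ (c.1 = d.1 ∧ ltQ.le c.2 d.2)))

/-- `rep` chooses from each equivalence class of reachable configurations the
length-lexicographically least representative. -/
def IsRepFun {α : Type} {pa : α → VPKind} (A : VPA α pa)
    (ltQ : LinearOrder A.Q) (ltΓ : LinearOrder A.Γ)
    (rep : List A.Γ × A.Q → List A.Γ × A.Q) : Prop :=
  ∀ c ∈ A.rConf, rep c ∈ A.rConf ∧ A.AccLang (rep c) = A.AccLang c ∧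
    ∀ c' ∈ A.rConf, A.AccLang c' = A.AccLang c → ConfLe ltQ ltΓ (rep c) c'

/-- `ν_A(w)`: the representative of the configuration reached on `w`. -/
def nuA {α : Type} {pa : α → VPKind} (A : VPA α pa)
    (rep : List A.Γ × A.Q → List A.Γ × A.Q) (w : List α) : List A.Γ × A.Q :=
  rep (A.run ([], A.q₀) w)

/-- `σ₀(w)`: the states representing the Myhill–Nerode classes of the nonempty suffixes. -/
def sigma0 {α : Type} {pa : α → VPKind} (A : VPA α pa)
    (rep : List A.Γ × A.Q → List A.Γ × A.Q) (w : List α) : List A.Q :=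
  w.tails.dropLast.map fun s => (nuA A rep s).2

/-- `φ(w)`: the state transformation of a well-matched word. -/
def phiVPA {α : Type} {pa : α → VPKind} (A : VPA α pa) (w : List α) : A.Q → A.Q :=
  fun p => (A.run ([], p) w).2

/-- `σ₁(w) = φ(w) q₂ ⋯ qₙ`, a word over the alphabet `Q^Q ∪ Q`. -/
def sigma1 {α : Type} {pa : α → VPKind} (A : VPA α pa)
    (rep : List A.Γ × A.Q → List A.Γ × A.Q) (w : List α) : List ((A.Q → A.Q) ⊕ A.Q) :=
  Sum.inl (phiVPA A w) :: ((sigma0 A rep w).tail.map Sum.inr)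

/-! ### Real-time right transducers -/

/-- A real-time right transducer (reads its input from right to left). -/
structure RightTransducer (α β : Type) where
  Q : Type
  finQ : Fintype Q
  F : Set Q
  I : Set Q
  Δ : Set (Q × α × List β × Q)
  finΔ : Δ.Finite
  o : Q → List β

namespace RightTransducer

variable {α β : Type}

/-- Input word of a sequence of transitions. -/
def inputOf {Q : Type} (ts : List (Q × α × List β × Q)) : List α :=
  ts.map fun tr => tr.2.1

/-- Output word of a sequence of transitions. -/
def outputOf {Q : Type} (ts : List (Q × α × List β × Q)) : List β :=
  (ts.map fun tr => tr.2.2.1).flatten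

/-- `IsRunFrom A q ts p`: `ts` is a run on its input from the (rightmost) state `p`
to the (leftmost) state `q`; the transitions are listed left to right. -/
def IsRunFrom (A : RightTransducer α β) : A.Q → List (A.Q × α × List β × A.Q) → A.Q → Prop
  | q, [], p => q = p
  | q, tr :: ts, p => tr ∈ A.Δ ∧ tr.1 = q ∧ IsRunFrom A tr.2.2.2 ts p

/-- There is a run on `w` from `p` (right) to `q` (left). -/
def RunOn (A : RightTransducer α β) (q : A.Q) (w : List α) (p : A.Q) : Prop :=
  ∃ ts, A.IsRunFrom q ts p ∧ inputOf ts = w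

/-- `q ⪯ p`: there is a run from `p` to `q`. -/
def Below (A : RightTransducer α β) (q p : A.Q) : Prop :=
  ∃ w, A.RunOn q w p

/-- The partial function defined by a right transducer. -/
def Defines (A : RightTransducer α β) (t : List α → Option (List β)) : Prop :=
  ∀ x y, t x = some y ↔ ∃ p q ts, p ∈ A.F ∧ q ∈ A.I ∧ A.IsRunFrom p ts q ∧
    inputOf ts = x ∧ y = A.o p ++ outputOf ts

/-- Every state occurs on some initial accepting run. -/
def Trim (A : RightTransducer α β) : Prop :=
  ∀ s : A.Q, ∃ p q ts₁ ts₂, p ∈ A.F ∧ q ∈ A.I ∧ A.IsRunFrom p ts₁ s ∧ A.IsRunFrom s ts₂ q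

/-- Every input word has at most one initial accepting run. -/
def Unambiguous (A : RightTransducer α β) : Prop :=
  ∀ p p' q q' ts ts', p ∈ A.F → p' ∈ A.F → q ∈ A.I → q' ∈ A.I →
    A.IsRunFrom p ts q → A.IsRunFrom p' ts' q' → inputOf ts = inputOf ts' →
    p = p' ∧ ts = ts'

/-- `w` is guarded by `p`: some run on `w` from `p` stays in the SCC of `p`. -/
def Guarded (A : RightTransducer α β) (p : A.Q) (w : List α) : Prop :=
  ∃ q', A.RunOn q' w p ∧ A.Below p q'

/-- The transducer is well-behaved: the terminal outputs of guarded accepting runs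
from the same state on words of equal length coincide. -/
def WellBehaved (A : RightTransducer α β) : Prop :=
  ∀ (p q q' : A.Q) ts ts', q ∈ A.F → q' ∈ A.F →
    A.IsRunFrom q ts p → A.IsRunFrom q' ts' p →
    A.Guarded p (inputOf ts) → A.Guarded p (inputOf ts') →
    (inputOf ts).length = (inputOf ts').length →
    A.o q ++ outputOf ts = A.o q' ++ outputOf ts'

end RightTransducer

/-! ### The Parikh-like map Ψ -/

/-- `Ψ(w)`: each letter of `w` paired with its position counted from the right (1-based). -/
def Psi {α : Type} (w : List α) : Set (α × ℕ) :=
  {p | ∃ i : ℕ, w[i]? = some p.1 ∧ p.2 = w.length - i}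

/-- `Ψ(L) = ⋃_{w ∈ L} Ψ(w)`. -/
def PsiL {α : Type} (L : Set (List α)) : Set (α × ℕ) :=
  ⋃ w ∈ L, Psi w

/-! For each `n`, the `2 ^ n` words `u₂ w zₙ` with `w` a product of `n` blocks from `{u, v}` have
length `O(n)` and pairwise distinct suffix expansions. If two of them have the same expansion, then
`t` agrees on their suffixes of equal length; were their last blocks `u` and `v`, the suffixes
`u₂ zₙ` and `v₂ zₙ` would have the same length, contradicting the fooling property. So the last
blocks coincide, and absorbing them into `zₙ` (which keeps the fooling property with one block fewer)
lets one peel off all blocks. -/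

section LinearFooling

variable {α Y : Type}

def uvWord (u v : List α) (s : List Bool) : List α :=
  (s.map (cond · u v)).flatten

theorem uvWord_append_singleton (u v : List α) (s : List Bool) (b : Bool) :
    uvWord u v (s ++ [b]) = uvWord u v s ++ cond b u v := by
  simp [uvWord]

theorem uvWord_mem_UVStar (u v : List α) (s : List Bool) : uvWord u v s ∈ UVStar u v :=
  ⟨s.map (cond · u v), by simp only [List.mem_map]; rintro _ ⟨(_ | _), -, rfl⟩ <;> simp, rfl⟩

theorem length_uvWord_le (u v : List α) (s : List Bool) :
    (uvWord u v s).length ≤ s.length * max u.length v.length := by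
  rw [uvWord, List.length_flatten, List.map_map]
  refine (List.sum_le_card_nsmul _ (max u.length v.length) fun n hn => ?_).trans_eq (by simp)
  obtain ⟨(_ | _), -, rfl⟩ := List.mem_map.mp hn <;> simp

theorem nil_mem_UVPow (u v : List α) (n : ℕ) : [] ∈ UVPow u v n :=
  ⟨[], by simp, by simp, rfl⟩

theorem append_cond_mem_UVPow {u v w : List α} {n : ℕ} (hw : w ∈ UVPow u v n) (b : Bool) :
    w ++ cond b u v ∈ UVPow u v (n + 1) := by
  obtain ⟨l, hl, hlen, rfl⟩ := hw
  refine ⟨l ++ [cond b u v], ?_, by simpa using hlen, by simp⟩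
  simp only [List.mem_append, List.mem_singleton]
  rintro p (hp | rfl)
  · exact hl p hp
  · cases b <;> simp

def AgreeOnSuffixes (t : List α → Y) (x y : List α) : Prop :=
  ∀ c d, c <:+ x → d <:+ y → c.length = d.length → t c = t d

theorem agreeOnSuffixes_of_cev_eq {t : List α → Y} {x y : List α} (h : cev t x = cev t y) :
    AgreeOnSuffixes t x y := by
  have hlen : x.length = y.length := by simpa [cev] using congrArg List.length h
  have hget : ∀ {w : List α} {i : ℕ}, i < w.length → (cev t w)[i]? = some (t (w.drop i)) := by
    intro w i hi
    simp [cev, hi, List.getElem_tails]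
  intro c d hc hd hcd
  rcases eq_or_ne c [] with rfl | hc0
  · rw [List.eq_nil_of_length_eq_zero hcd.symm]
  have hi : x.length - c.length < x.length := by
    have := hc.length_le
    have := List.length_pos_iff.mpr hc0
    omega
  rw [List.suffix_iff_eq_drop.mp hc, List.suffix_iff_eq_drop.mp hd, ← hlen, ← hcd]
  have hi' : x.length - c.length < y.length := hlen ▸ hi
  simpa [hget hi, hget hi'] using congrArg (·[x.length - c.length]?) h

variable {t : List α → Y} {u₂ v₂ u v : List α}

theorem cond_append_suffix_uvWord (hu : u₂ <:+ u) (hv : v₂ <:+ v) (x z : List α)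
    (s : List Bool) (b : Bool) : cond b u₂ v₂ ++ z <:+ x ++ (uvWord u v (s ++ [b]) ++ z) := by
  have hb : cond b u₂ v₂ <:+ cond b u v := by cases b <;> assumption
  rw [uvWord_append_singleton]
  exact (List.suffix_append_self_iff.mpr hb).trans
    (by simpa using List.suffix_append (x ++ uvWord u v s) (cond b u v ++ z))

theorem eq_of_agreeOnSuffixes (hu : u₂ <:+ u) (hv : v₂ <:+ v) (hlen : u₂.length = v₂.length)
    {s s' : List Bool} {z : List α} (hss' : s.length = s'.length)
    (hfool : ∀ w ∈ UVPow u v s.length, t (u₂ ++ (w ++ z)) ≠ t (v₂ ++ (w ++ z)))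
    (hagree : AgreeOnSuffixes t (u₂ ++ (uvWord u v s ++ z)) (u₂ ++ (uvWord u v s' ++ z))) :
    s = s' := by
  induction s using List.reverseRecOn generalizing s' z with
  | nil => exact (List.eq_nil_of_length_eq_zero hss'.symm).symm
  | append_singleton s b ih =>
    obtain ⟨s', b', rfl⟩ : ∃ s₀ b₀, s' = s₀ ++ [b₀] := by
      rcases List.eq_nil_or_concat' s' with rfl | h
      · simp at hss'
      · exact h
    have hb : b = b' := by
      have hz := hfool [] (nil_mem_UVPow u v _)
      have hlast := hagree _ _ (cond_append_suffix_uvWord hu hv _ z s b)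
        (cond_append_suffix_uvWord hu hv _ z s' b') (by cases b <;> cases b' <;> simp [hlen])
      rw [List.nil_append] at hz
      cases b <;> cases b'
      all_goals first | rfl | exact absurd hlast hz | exact absurd hlast.symm hz
    subst hb
    rw [ih (z := cond b u v ++ z) (by simpa using hss')
      (fun w hw => by
        have := hfool _ (by simpa using append_cond_mem_UVPow hw b)
        rwa [List.append_assoc] at this)
      (by simpa [uvWord_append_singleton] using hagree)]

theorem growsExponentially_of_two_pow_le {γ : ℕ → ℕ} {K : ℕ} (hK : 0 < K)
    (h : ∀ n, 0 < n → 2 ^ n ≤ γ (K * n)) : GrowsExponentially γ := by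
  refine ⟨2 ^ (K⁻¹ : ℝ), Real.one_lt_rpow one_lt_two (by positivity),
    fun m => ⟨K * (m + 1), by nlinarith, ?_⟩⟩
  calc (2 ^ (K⁻¹ : ℝ) : ℝ) ^ (K * (m + 1)) = 2 ^ (m + 1) := by
        rw [← Real.rpow_natCast, ← Real.rpow_mul zero_le_two, ← Real.rpow_natCast]
        congr 1
        push_cast
        field_simp
    _ ≤ γ (K * (m + 1)) := by exact_mod_cast h _ m.succ_pos

theorem two_pow_le_growthOf [Finite α] {f : List α → Y} {X : Set (List α)} {n N : ℕ}
    (x : (Fin n → Bool) → List α) (hxX : ∀ σ, x σ ∈ X) (hxN : ∀ σ, (x σ).length ≤ N)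
    (hinj : Function.Injective (f ∘ x)) : 2 ^ n ≤ growthOf f X N := by
  have hfin : (f '' {x | x ∈ X ∧ x.length ≤ N}).Finite :=
    ((List.finite_length_le α N).subset fun _ hx => hx.2).image f
  calc 2 ^ n = (Set.univ : Set (Fin n → Bool)).ncard := by simp [Set.ncard_univ]
    _ ≤ growthOf f X N := Set.ncard_le_ncard_of_injOn (f ∘ x)
      (fun σ _ => Set.mem_image_of_mem f ⟨hxX σ, hxN σ⟩) hinj.injOn hfin

end LinearFooling

theorem statement3_general {α β : Type} [Fintype α]
    (t : List α → Option (List β))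
    (X : Set (List α))
    (hfool : ContainsLinearFoolingSet t X) :
    GrowsExponentially (growthOf (cev t) X) := by
  obtain ⟨u₂, v₂, u, v, Z, ⟨hu, hv, hlen, -, C, hC⟩, hX⟩ := hfool
  set M := max u.length v.length
  refine growsExponentially_of_two_pow_le (K := 2 * M + 2 * C + 1) (by omega) fun n hn => ?_
  obtain ⟨z, hz, hzlen, hzfool⟩ := hC n
  refine two_pow_le_growthOf (fun σ : Fin n → Bool => u₂ ++ (uvWord u v (List.ofFn σ) ++ z))
    (fun σ => hX ⟨u₂, _, z, .inl rfl, uvWord_mem_UVStar u v _, hz, rfl⟩) (fun σ => ?_)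
    (fun σ σ' h => List.ofFn_injective ?_)
  · have hu₂ : u₂.length ≤ M := hu.length_le.trans (le_max_left _ _)
    have hw : (uvWord u v (List.ofFn σ)).length ≤ n * M := by
      simpa using length_uvWord_le u v (List.ofFn σ)
    simp only [List.length_append]
    nlinarith
  · exact eq_of_agreeOnSuffixes hu hv hlen (by simp) (by simpa using hzfool)
      (agreeOnSuffixes_of_cev_eq h)

/-- if a partial function `t` has suffix-closed domain and
`X ⊆ dom t` contains a linear fooling set for `t`, then the `⟨t⟩`-growth of `X`
is exponential. -/
theorem statement3 {α β : Type} [Fintype α] [Fintype β]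
    (t : List α → Option (List β)) (hsc : SuffixClosed (pdom t))
    (X : Set (List α)) (hX : X ⊆ pdom t)
    (hfool : ContainsLinearFoolingSet t X) :
    GrowsExponentially (growthOf (cev t) X) :=
  statement3_general t X hfool
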